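/- arXiv:1609.03078 — 3 statements merged into one kernel-verified Lean document; each statement's English description precedes it below -/
import Mathlib

section
/- Let A ⊆ [0,1] be a set of positive Lebesgue outer measure, and let ⪯ be a total preorder on A (reflexive, transitive, with any two elements of A comparable) such that for every x ∈ A the initial segment {y ∈ A : y ⪯ x} is Lebesgue null. Define B₁ = {(x,y) ∈ A × A : x ⪯ y} and B₂ = {(x,y) ∈ A × A : y ⪯ x}. Then at least one of the three sets A ⊆ ℝ, B₁ ⊆ ℝ × ℝ, B₂ ⊆ ℝ × ℝ is not Lebesgue measurable (i.e., is not null-measurable with respect to Lebesgue measure / the volume measure). -/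
/-!
If `B₁` and `B₂` were both measurable, Fubini would make them null: every horizontal section of
`B₁` and every vertical section of `B₂` lies in an initial segment of `⪯`. Totality gives
`A × A ⊆ B₁ ∪ B₂`, so `μ*(A)² = μ*(A × A) = 0`, contradicting `μ*(A) > 0`.
-/

open MeasureTheory

namespace MeasureTheory.NullMeasurableSet

variable {α β : Type*} [MeasurableSpace α] [MeasurableSpace β] {μ : Measure α} {ν : Measure β}
  {s : Set (α × β)}

theorem measure_prod_null_of_ae_null_left (hs : NullMeasurableSet s (μ.prod ν))
    (h : ∀ᵐ x ∂μ, ν (Prod.mk x ⁻¹' s) = 0) : μ.prod ν s = 0 := by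
  obtain ⟨t, hts, ht, hst⟩ := hs.exists_measurable_subset_ae_eq
  rw [← measure_congr hst]
  refine Measure.measure_prod_null_of_ae_null ht (h.mono fun x hx => ?_)
  exact measure_mono_null (Set.preimage_mono hts) hx

theorem measure_prod_null_of_ae_null_right [SFinite μ] [SFinite ν]
    (hs : NullMeasurableSet s (μ.prod ν))
    (h : ∀ᵐ y ∂ν, μ ((fun x => (x, y)) ⁻¹' s) = 0) : μ.prod ν s = 0 := by
  have hswap := Measure.measurePreserving_swap (μ := ν) (ν := μ)
  rw [← hswap.measure_preimage hs]
  exact (hs.preimage hswap.quasiMeasurePreserving).measure_prod_null_of_ae_null_left h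

end MeasureTheory.NullMeasurableSet

section InitialSegments

variable {α : Type*} [MeasurableSpace α] {μ : Measure α} {A : Set α}
  {r : α → α → Prop}

theorem measure_prod_setOf_rel_eq_zero [SFinite μ] (hseg : ∀ x ∈ A, μ {y | y ∈ A ∧ r y x} = 0)
    (hB : NullMeasurableSet {p : α × α | p.1 ∈ A ∧ p.2 ∈ A ∧ r p.1 p.2} (μ.prod μ)) :
    μ.prod μ {p : α × α | p.1 ∈ A ∧ p.2 ∈ A ∧ r p.1 p.2} = 0 := by
  refine hB.measure_prod_null_of_ae_null_right (.of_forall fun y => ?_)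
  by_cases hy : y ∈ A
  · exact measure_mono_null (fun x hx => show x ∈ {x | x ∈ A ∧ r x y} from ⟨hx.1, hx.2.2⟩)
      (hseg y hy)
  · exact measure_mono_null (fun x hx => hy hx.2.1) measure_empty

theorem measure_prod_setOf_rel_swap_eq_zero (hseg : ∀ x ∈ A, μ {y | y ∈ A ∧ r y x} = 0)
    (hB : NullMeasurableSet {p : α × α | p.1 ∈ A ∧ p.2 ∈ A ∧ r p.2 p.1} (μ.prod μ)) :
    μ.prod μ {p : α × α | p.1 ∈ A ∧ p.2 ∈ A ∧ r p.2 p.1} = 0 := by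
  refine hB.measure_prod_null_of_ae_null_left (.of_forall fun x => ?_)
  by_cases hx : x ∈ A
  · exact measure_mono_null (fun y hy => show y ∈ {y | y ∈ A ∧ r y x} from ⟨hy.2.1, hy.2.2⟩)
      (hseg x hx)
  · exact measure_mono_null (fun y hy => hx hy.1) measure_empty

theorem measure_eq_zero_of_total_of_measure_initialSegment_eq_zero [SFinite μ]
    (htotal : ∀ x ∈ A, ∀ y ∈ A, r x y ∨ r y x)
    (hseg : ∀ x ∈ A, μ {y | y ∈ A ∧ r y x} = 0)
    (hB₁ : NullMeasurableSet {p : α × α | p.1 ∈ A ∧ p.2 ∈ A ∧ r p.1 p.2} (μ.prod μ))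
    (hB₂ : NullMeasurableSet {p : α × α | p.1 ∈ A ∧ p.2 ∈ A ∧ r p.2 p.1} (μ.prod μ)) :
    μ A = 0 := by
  have hsub : A ×ˢ A ⊆ {p : α × α | p.1 ∈ A ∧ p.2 ∈ A ∧ r p.1 p.2} ∪
      {p : α × α | p.1 ∈ A ∧ p.2 ∈ A ∧ r p.2 p.1} := by
    rintro ⟨x, y⟩ ⟨hx, hy⟩
    exact (htotal x hx y hy).imp (fun h => ⟨hx, hy, h⟩) (fun h => ⟨hx, hy, h⟩)
  have hprod : μ.prod μ (A ×ˢ A) = 0 :=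
    measure_mono_null hsub <| measure_union_null (measure_prod_setOf_rel_eq_zero hseg hB₁)
      (measure_prod_setOf_rel_swap_eq_zero hseg hB₂)
  rwa [Measure.prod_prod, mul_self_eq_zero] at hprod

end InitialSegments

theorem stmt0_general (A : Set ℝ) (hpos : 0 < volume A)
    (r : ℝ → ℝ → Prop)
    (htotal : ∀ x ∈ A, ∀ y ∈ A, r x y ∨ r y x)
    (hseg : ∀ x ∈ A, volume {y | y ∈ A ∧ r y x} = 0) :
    ¬ NullMeasurableSet A (volume : Measure ℝ) ∨
    ¬ NullMeasurableSet {p : ℝ × ℝ | p.1 ∈ A ∧ p.2 ∈ A ∧ r p.1 p.2}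
        (volume : Measure (ℝ × ℝ)) ∨
    ¬ NullMeasurableSet {p : ℝ × ℝ | p.1 ∈ A ∧ p.2 ∈ A ∧ r p.2 p.1}
        (volume : Measure (ℝ × ℝ)) := by
  refine .inr <| not_and_or.mp fun ⟨hB₁, hB₂⟩ => hpos.ne' ?_
  exact measure_eq_zero_of_total_of_measure_initialSegment_eq_zero htotal hseg hB₁ hB₂

/-- If `A ⊆ [0,1]` has positive Lebesgue outer measure and `r` is a total preorder on `A`
all of whose initial segments are Lebesgue null, then one of `A`,
`B₁ = {(x,y) ∈ A × A : x ⪯ y}`, `B₂ = {(x,y) ∈ A × A : y ⪯ x}` is not Lebesgue measurable. -/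
theorem stmt0 (A : Set ℝ) (hA : A ⊆ Set.Icc 0 1) (hpos : 0 < volume A)
    (r : ℝ → ℝ → Prop)
    (hrefl : ∀ x ∈ A, r x x)
    (htrans : ∀ x ∈ A, ∀ y ∈ A, ∀ z ∈ A, r x y → r y z → r x z)
    (htotal : ∀ x ∈ A, ∀ y ∈ A, r x y ∨ r y x)
    (hseg : ∀ x ∈ A, volume {y | y ∈ A ∧ r y x} = 0) :
    ¬ NullMeasurableSet A (volume : Measure ℝ) ∨
    ¬ NullMeasurableSet {p : ℝ × ℝ | p.1 ∈ A ∧ p.2 ∈ A ∧ r p.1 p.2}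
        (volume : Measure (ℝ × ℝ)) ∨
    ¬ NullMeasurableSet {p : ℝ × ℝ | p.1 ∈ A ∧ p.2 ∈ A ∧ r p.2 p.1}
        (volume : Measure (ℝ × ℝ)) :=
  stmt0_general A hpos r htotal hseg
end

section
/- Let A ⊆ 2^ω be a Borel subset of Cantor space with μ(A) < 1/1000. Then there exists a tree T ⊆ 2^{<ω} such that: lim(T) ∩ A = ∅; μ(lim(T)) = 1/2; and for every finite binary string η ∈ T, μ(lim(T) ∩ [η]) = k · 4^{−(|η|+1)} for some integer k with 1 ≤ k ≤ 4^{|η|+1}. -/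
open MeasureTheory ENNReal

/-- The basic clopen set `[η]` of all `x ∈ 2^ω` extending the finite binary string `η`. -/
def cylinder (η : List Bool) : Set (ℕ → Bool) :=
  {x | ∀ i : Fin η.length, x i = η.get i}

/-- `lim(T)`: the set of branches of a tree `T ⊆ 2^{<ω}`, i.e. all `x ∈ 2^ω` whose
finite initial segments all lie in `T`. -/
def limTree (T : Set (List Bool)) : Set (ℕ → Bool) :=
  {x | ∀ n : ℕ, (List.ofFn fun i : Fin n => x i) ∈ T}

/-!
Replace `A` by an open `U ⊇ A` with `μ U < 1/1000`. Along the binary tree we choose integer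
weights `k η` and closed sets `S η ⊆ [η] \ U` with `k (η0) + k (η1) = 4 k η`, where
`μ (S η) = (k η + 1) · 4^{-(|η|+1)}` if `k η ≠ 0` and `S η = ∅` otherwise; the root has `k = 2`
and `μ (S []) = 3/4`. The extra unit is what makes the next step possible: the two halves of
`S η` carry `4 k η + 4` units of the next level, so a greedy split lets each child keep one unit
more than its weight after an exact cut (a closed subset of prescribed measure, which exists
because `μ` has no atoms). Take `T = {η | k η ≠ 0}`. Then `lim T` is the set of branches through
all the `S η`, and its measure in `[η]` is exactly `k η · 4^{-(|η|+1)}`: the nodes `j` levels below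
`η` exceed their weights by `2^j` units of level `|η| + j` at most, which is `2^{-j}` units of
level `|η|`.
-/

open Set Filter Topology

lemma Cardinal.continuous_cantorFunction {c : ℝ} (h0 : 0 ≤ c) (h1 : c < 1) :
    Continuous (cantorFunction c) := by
  refine continuous_tsum (fun n => ?_) (summable_geometric_of_lt_one h0 h1) fun n x => ?_
  · exact (continuous_of_discreteTopology (f := fun b : Bool => cond b (c ^ n) 0)).comp
      (continuous_apply n)
  · simp only [cantorFunctionAux]
    cases x n <;> simp [abs_of_nonneg h0, pow_nonneg h0]

theorem exists_measure_Iic_eq (ν : Measure ℝ) [IsFiniteMeasure ν] [NullSingletonClass ν]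
    {a b : ℝ} {t : ℝ≥0∞} (ha : ν (Iic a) ≤ t) (hb : t ≤ ν (Iic b)) : ∃ r, ν (Iic r) = t := by
  rcases le_total a b with hab | hba
  · have hcont : ContinuousOn (fun r => ν (Iic r)) (Icc a b) := by
      have h := IntegrableOn.continuousOn_Iic_primitive_Iic
        (integrableOn_const (μ := ν) (s := Iic b) (C := (1 : ℝ)))
      refine (ENNReal.continuous_ofReal.comp_continuousOn (h.mono Icc_subset_Iic_self)).congr
        fun r _ => ?_
      simp
    obtain ⟨r, -, hr⟩ := intermediate_value_Icc hab hcont ⟨ha, hb⟩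
    exact ⟨r, hr⟩
  · exact ⟨a, le_antisymm ha (hb.trans (measure_mono (Iic_subset_Iic.2 hba)))⟩

theorem exists_isClosed_subset_measure_eq {X : Type*} [TopologicalSpace X] [CompactSpace X]
    [MeasurableSpace X] [OpensMeasurableSpace X] {μ : Measure X} [IsFiniteMeasure μ]
    [NullSingletonClass μ] {g : X → ℝ} (hg : Continuous g) (hg_inj : Function.Injective g)
    {K : Set X} (hK : IsClosed K) {t : ℝ≥0∞} (ht : t ≤ μ K) :
    ∃ K' ⊆ K, IsClosed K' ∧ μ K' = t := by
  set ν := (μ.restrict K).map g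
  have hν : ∀ s, MeasurableSet s → ν s = μ (g ⁻¹' s ∩ K) := fun s hs => by
    rw [Measure.map_apply hg.measurable hs, Measure.restrict_apply (hg.measurable hs)]
  have : NullSingletonClass ν := ⟨fun r => by
    rw [hν _ (measurableSet_singleton r)]
    exact measure_mono_null inter_subset_left
      ((subsingleton_singleton.preimage hg_inj).measure_zero μ)⟩
  obtain ⟨a, ha⟩ := (isCompact_range hg).bddBelow
  obtain ⟨b, hb⟩ := (isCompact_range hg).bddAbove
  have hgb : g ⁻¹' Iic b = univ := preimage_eq_univ_iff.2 fun _ ⟨x, hx⟩ => hx ▸ hb (mem_range_self x)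
  have hga : g ⁻¹' Iic (a - 1) = ∅ := eq_empty_of_forall_notMem fun x hx => by
    linarith [ha (mem_range_self x), show g x ≤ a - 1 from hx]
  obtain ⟨r, hr⟩ := exists_measure_Iic_eq ν (a := a - 1) (b := b) (t := t)
    (by rw [hν _ measurableSet_Iic, hga, empty_inter, measure_empty]; exact zero_le)
    (by rwa [hν _ measurableSet_Iic, hgb, univ_inter])
  refine ⟨g ⁻¹' Iic r ∩ K, inter_subset_right, (isClosed_Iic.preimage hg).inter hK, ?_⟩
  rw [← hr, hν _ measurableSet_Iic]

theorem ENNReal.exists_nat_split_of_le_add (a₀ a₁ w : ℝ≥0∞) (n : ℕ)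
    (h : (n + 3) * w ≤ a₀ + a₁) :
    ∃ k₀ k₁ : ℕ, k₀ + k₁ = n ∧ (k₀ ≠ 0 → (k₀ + 1) * w ≤ a₀) ∧ (k₁ ≠ 0 → (k₁ + 1) * w ≤ a₁) := by
  classical
  -- `k₀` is the largest weight that fits into `a₀`. If `k₀ < n`, then `a₀ < (k₀ + 2) w`,
  -- so `a₁` holds at least `(n - k₀ + 1) w`.
  set k₀ := Nat.findGreatest (fun m => (m + 1) * w ≤ a₀) n with hk₀
  refine ⟨k₀, n - k₀, by have := Nat.findGreatest_le (P := fun m => (m + 1) * w ≤ a₀) n; omega,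
    fun h0 => Nat.findGreatest_of_ne_zero hk₀.symm h0, fun h1 => ?_⟩
  have hlt₀ : a₀ < (k₀ + 2) * w := by
    have := Nat.findGreatest_is_greatest (P := fun m => (m + 1) * w ≤ a₀) (k := k₀ + 1)
      (Nat.lt_succ_self _) (by omega)
    push_cast at this
    rw [add_assoc, one_add_one_eq_two] at this
    exact not_le.1 this
  by_contra! hlt₁
  refine (ENNReal.add_lt_add hlt₀ hlt₁).not_ge (h.trans_eq' ?_)
  have : (k₀ : ℝ≥0∞) + (n - k₀ : ℕ) = n := by norm_cast; omega
  rw [← add_mul, ← this]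
  ring

namespace CantorSpace

def initSeg (x : ℕ → Bool) (n : ℕ) : List Bool := List.ofFn fun i : Fin n => x i

@[simp] lemma length_initSeg (x : ℕ → Bool) (n : ℕ) : (initSeg x n).length = n :=
  List.length_ofFn

@[simp] lemma initSeg_zero (x : ℕ → Bool) : initSeg x 0 = [] := rfl

lemma initSeg_succ (x : ℕ → Bool) (n : ℕ) : initSeg x (n + 1) = initSeg x n ++ [x n] := by
  rw [initSeg, List.ofFn_succ', List.concat_eq_append]
  rfl

lemma mem_cylinder_iff_initSeg_eq {x : ℕ → Bool} {η : List Bool} :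
    x ∈ cylinder η ↔ initSeg x η.length = η := by
  rw [initSeg, List.ext_get_iff]
  simp [_root_.cylinder, Fin.forall_iff]

lemma cylinder_initSeg (x : ℕ → Bool) (n : ℕ) : cylinder (initSeg x n) = PiNat.cylinder x n := by
  ext y
  simp [_root_.cylinder, initSeg, PiNat.mem_cylinder_iff, Fin.forall_iff]

lemma mem_cylinder_initSeg (x : ℕ → Bool) (n : ℕ) : x ∈ cylinder (initSeg x n) := by
  simp [cylinder_initSeg]

lemma cylinder_initSeg_anti (x : ℕ → Bool) {m n : ℕ} (h : m ≤ n) :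
    cylinder (initSeg x n) ⊆ cylinder (initSeg x m) := by
  simpa only [cylinder_initSeg] using PiNat.cylinder_anti x h

@[simp] lemma cylinder_nil : cylinder [] = univ :=
  eq_univ_of_forall fun _ i => i.elim0

lemma cylinder_append_singleton (η : List Bool) (b : Bool) :
    cylinder (η ++ [b]) = cylinder η ∩ {x | x η.length = b} := by
  ext x
  simp only [mem_cylinder_iff_initSeg_eq, mem_inter_iff, mem_ofPred_eq, List.length_append,
    List.length_singleton, initSeg_succ]
  constructor
  · intro h
    obtain ⟨h1, h2⟩ := List.append_inj' h rfl
    exact ⟨h1, by simpa using h2⟩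
  · rintro ⟨h1, rfl⟩
    rw [h1]

lemma cylinder_eq_union (η : List Bool) :
    cylinder η = cylinder (η ++ [false]) ∪ cylinder (η ++ [true]) := by
  ext x
  cases h : x η.length <;> simp [cylinder_append_singleton, h]

lemma disjoint_cylinder_append (η : List Bool) :
    Disjoint (cylinder (η ++ [false])) (cylinder (η ++ [true])) := by
  rw [cylinder_append_singleton, cylinder_append_singleton]
  exact disjoint_left.2 fun x hx hx' => by simp_all

lemma isClosed_cylinder (η : List Bool) : IsClosed (cylinder η) := by
  simp only [_root_.cylinder, ofPred_forall]
  exact isClosed_iInter fun i => isClosed_eq (continuous_apply _) continuous_const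

lemma exists_disjoint_cylinder_initSeg {K : Set (ℕ → Bool)} (hK : IsClosed K) {x : ℕ → Bool}
    (hx : x ∉ K) : ∃ n, Disjoint K (cylinder (initSeg x n)) := by
  simpa only [cylinder_initSeg] using PiNat.exists_disjoint_cylinder hK hx

lemma nullSingletonClass_of_measure_cylinder {μ : Measure (ℕ → Bool)}
    (hμ : ∀ η, μ (cylinder η) = ((2 : ℝ≥0∞) ^ η.length)⁻¹) : NullSingletonClass μ where
  measure_singleton x := by
    refine le_antisymm (ge_of_tendsto' (ENNReal.tendsto_pow_atTop_nhds_zero_of_lt_one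
      (r := 2⁻¹) (by norm_num)) fun n => ?_) zero_le
    calc μ {x} ≤ μ (cylinder (initSeg x n)) :=
          measure_mono (singleton_subset_iff.2 (mem_cylinder_initSeg x n))
      _ = 2⁻¹ ^ n := by rw [hμ, length_initSeg, ENNReal.inv_pow]

/-- The unit in which the measures attached to nodes of length `n` are counted. -/
noncomputable def unitAt (n : ℕ) : ℝ≥0∞ := ((4 : ℝ≥0∞) ^ (n + 1))⁻¹

lemma unitAt_ne_zero (n : ℕ) : unitAt n ≠ 0 := by simp [unitAt]

lemma unitAt_ne_top (n : ℕ) : unitAt n ≠ ⊤ := by simp [unitAt]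

lemma four_mul_unitAt_succ (n : ℕ) : 4 * unitAt (n + 1) = unitAt n := by
  rw [unitAt, unitAt, pow_succ, ENNReal.mul_inv (by simp) (by simp), mul_left_comm,
    ENNReal.mul_inv_cancel (by norm_num) (by norm_num), mul_one]

lemma two_mul_unitAt_succ (n : ℕ) : 2 * unitAt (n + 1) = 2⁻¹ * unitAt n := by
  rw [← four_mul_unitAt_succ n, ← mul_assoc, show (4 : ℝ≥0∞) = 2 * 2 by norm_num, ← mul_assoc,
    ENNReal.inv_mul_cancel two_ne_zero ofNat_ne_top, one_mul]

lemma two_mul_unitAt_zero : 2 * unitAt 0 = 1 / 2 := by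
  rw [unitAt, zero_add, pow_one, show (4 : ℝ≥0∞) = 2 * 2 by norm_num,
    ENNReal.mul_inv (by simp) (by simp), ← mul_assoc, ENNReal.mul_inv_cancel (by simp) (by simp),
    one_mul, one_div]

lemma three_mul_unitAt_zero_le_measure_compl {X : Type*} [MeasurableSpace X] {μ : Measure X}
    [IsProbabilityMeasure μ] {U : Set X} (hU : MeasurableSet U) (hμU : μ U ≤ 4⁻¹) :
    3 * unitAt 0 ≤ μ Uᶜ := by
  rw [prob_compl_eq_one_sub hU]
  refine ENNReal.le_sub_of_add_le_left (measure_ne_top _ _) ?_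
  calc μ U + 3 * unitAt 0 ≤ 4⁻¹ + 3 * 4⁻¹ := by
        rw [unitAt, zero_add, pow_one]
        gcongr
    _ = 1 := by
        rw [← one_add_mul, show (1 : ℝ≥0∞) + 3 = 4 by norm_num,
          ENNReal.mul_inv_cancel (by norm_num) (by norm_num)]

lemma le_four_pow_of_mul_unitAt_le_one {k n : ℕ} (h : k * unitAt n ≤ 1) : k ≤ 4 ^ (n + 1) := by
  rw [unitAt, ENNReal.mul_inv_le_iff (by simp) (by simp), one_mul] at h
  exact_mod_cast h

structure Node where
  k : ℕ
  S : Set (ℕ → Bool)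

def Node.pruned : Node := ⟨0, ∅⟩

instance : Inhabited Node := ⟨.pruned⟩

variable (μ : Measure (ℕ → Bool))

structure Node.Valid (η : List Bool) (P : Node) : Prop where
  isClosed : IsClosed P.S
  subset_cylinder : P.S ⊆ cylinder η
  eq_empty : P.k = 0 → P.S = ∅
  measure_eq : P.k ≠ 0 → μ P.S = (P.k + 1) * unitAt η.length

structure Node.IsSplit (η : List Bool) (P : Node) (c : Bool → Node) : Prop where
  k_add : (c false).k + (c true).k = 4 * P.k
  valid : ∀ b, (c b).Valid μ (η ++ [b])
  subset : ∀ b, (c b).S ⊆ P.S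

lemma Node.valid_pruned (η : List Bool) : Node.pruned.Valid μ η :=
  ⟨isClosed_empty, empty_subset _, fun _ => rfl, fun h => (h rfl).elim⟩

noncomputable def node (root : Node) (η : List Bool) : Node :=
  η.reverseRecOn root fun η b P => Classical.epsilon (P.IsSplit μ η) b

def tree (root : Node) : Set (List Bool) := {η | (node μ root η).k ≠ 0}

def approx (root : Node) (j : ℕ) (η : List Bool) : Set (ℕ → Bool) :=
  cylinder η ∩ {x | x ∈ (node μ root (initSeg x (η.length + j))).S}

variable {μ} {root : Node}

@[simp] lemma node_nil : node μ root [] = root := by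
  rw [node, List.reverseRecOn_nil]

lemma node_append_singleton (η : List Bool) (b : Bool) :
    node μ root (η ++ [b]) = Classical.epsilon ((node μ root η).IsSplit μ η) b := by
  rw [node, List.reverseRecOn_concat]
  rfl

lemma approx_subset_cylinder {j : ℕ} {η : List Bool} : approx μ root j η ⊆ cylinder η :=
  inter_subset_left

lemma approx_succ (j : ℕ) (η : List Bool) :
    approx μ root (j + 1) η = approx μ root j (η ++ [false]) ∪ approx μ root j (η ++ [true]) := by
  simp only [approx, List.length_append, List.length_singleton, add_right_comm _ 1 j, add_assoc]
  rw [cylinder_eq_union η, union_inter_distrib_right]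

variable [IsFiniteMeasure μ] [NullSingletonClass μ]

lemma exists_valid_node {η : List Bool} {K : Set (ℕ → Bool)} (hK : IsClosed K)
    (hKη : K ⊆ cylinder η) {k : ℕ} (hk : k ≠ 0 → (k + 1) * unitAt η.length ≤ μ K) :
    ∃ P : Node, P.k = k ∧ P.Valid μ η ∧ P.S ⊆ K := by
  rcases eq_or_ne k 0 with rfl | hk0
  · exact ⟨.pruned, rfl, Node.valid_pruned μ η, empty_subset _⟩
  obtain ⟨K', hK'K, hK', hμK'⟩ := exists_isClosed_subset_measure_eq
    (Cardinal.continuous_cantorFunction (c := 1 / 3) (by norm_num) (by norm_num))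
    (Cardinal.cantorFunction_injective (by norm_num) (by norm_num)) hK (hk hk0)
  exact ⟨⟨k, K'⟩, rfl, ⟨hK', hK'K.trans hKη, fun h => (hk0 h).elim, fun _ => hμK'⟩, hK'K⟩

lemma Node.Valid.exists_isSplit {η : List Bool} {P : Node} (hP : P.Valid μ η) :
    ∃ c, P.IsSplit μ η c := by
  rcases eq_or_ne P.k 0 with hk | hk
  · exact ⟨fun _ => .pruned, by simp [Node.pruned, hk], fun b => Node.valid_pruned μ _,
      fun _ => empty_subset _⟩
  have hsplit : ((4 * P.k : ℕ) + 3) * unitAt (η.length + 1)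
      ≤ μ (P.S ∩ cylinder (η ++ [false])) + μ (P.S ∩ cylinder (η ++ [true])) := by
    rw [← measure_union ((disjoint_cylinder_append η).mono inter_subset_right inter_subset_right)
      (hP.isClosed.measurableSet.inter (isClosed_cylinder _).measurableSet),
      ← inter_union_distrib_left, ← cylinder_eq_union, inter_eq_left.2 hP.subset_cylinder,
      hP.measure_eq hk, ← four_mul_unitAt_succ η.length, ← mul_assoc]
    gcongr
    norm_cast
    omega
  obtain ⟨k₀, k₁, hk₀₁, h₀, h₁⟩ := ENNReal.exists_nat_split_of_le_add _ _ _ _ hsplit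
  have hchild : ∀ b, ∃ Q : Node, Q.k = cond b k₁ k₀ ∧ Q.Valid μ (η ++ [b]) ∧ Q.S ⊆ P.S := by
    intro b
    obtain ⟨Q, hQk, hQ, hQS⟩ := exists_valid_node (η := η ++ [b])
      (hP.isClosed.inter (isClosed_cylinder _)) inter_subset_right (k := cond b k₁ k₀)
      (by cases b <;> simpa using (by assumption))
    exact ⟨Q, hQk, hQ, hQS.trans inter_subset_left⟩
  choose c hck hc hcS using hchild
  exact ⟨c, by simp [hck, hk₀₁], hc, hcS⟩

lemma isSplit_node_of_valid {η : List Bool} (h : (node μ root η).Valid μ η) :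
    (node μ root η).IsSplit μ η fun b => node μ root (η ++ [b]) := by
  simp only [node_append_singleton]
  exact Classical.epsilon_spec h.exists_isSplit

variable (hroot : root.Valid μ [])
include hroot

lemma valid_node (η : List Bool) : (node μ root η).Valid μ η := by
  induction η using List.reverseRecOn with
  | nil => rwa [node_nil]
  | append_singleton η b ih => exact (isSplit_node_of_valid ih).valid b

lemma isSplit_node (η : List Bool) :
    (node μ root η).IsSplit μ η fun b => node μ root (η ++ [b]) :=
  isSplit_node_of_valid (valid_node hroot η)

lemma node_k_append_eq_zero {t : List Bool} (ht : (node μ root t).k = 0) (u : List Bool) :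
    (node μ root (t ++ u)).k = 0 := by
  induction u using List.reverseRecOn with
  | nil => simpa
  | append_singleton u b ih =>
    have := (isSplit_node hroot (t ++ u)).k_add
    rw [← List.append_assoc]
    cases b <;> omega

lemma antitone_node_initSeg (x : ℕ → Bool) : Antitone fun n => (node μ root (initSeg x n)).S :=
  antitone_nat_of_succ_le fun n => by
    simpa only [initSeg_succ] using (isSplit_node hroot (initSeg x n)).subset (x n)

/-- If `x` leaves some `S η` along its branch, a whole cylinder around `x` misses `S η` (which
is closed), so the node at the end of that cylinder has an empty set and hence weight `0`. -/
lemma mem_limTree_tree_iff {x : ℕ → Bool} :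
    x ∈ limTree (tree μ root) ↔ ∀ n, x ∈ (node μ root (initSeg x n)).S := by
  refine ⟨fun hx n => ?_, fun hx n hk => ?_⟩
  · by_contra hxn
    obtain ⟨m, hm⟩ := exists_disjoint_cylinder_initSeg (valid_node hroot _).isClosed hxn
    have hempty : (node μ root (initSeg x (max m n))).S = ∅ := by
      refine subset_empty_iff.1 fun y hy => hm.ne_of_mem
        (antitone_node_initSeg hroot x (le_max_right m n) hy)
        (cylinder_initSeg_anti x (le_max_left m n) ((valid_node hroot _).subset_cylinder hy)) rfl
    have hμ := (valid_node hroot (initSeg x (max m n))).measure_eq (hx (max m n))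
    rw [hempty, measure_empty] at hμ
    exact mul_ne_zero (by simp) (unitAt_ne_zero _) hμ.symm
  · simpa [(valid_node hroot (initSeg x n)).eq_empty hk] using hx n

lemma approx_zero (η : List Bool) : approx μ root 0 η = (node μ root η).S := by
  ext x
  simp only [approx, mem_inter_iff, mem_ofPred_eq, add_zero]
  refine ⟨fun ⟨hη, hx⟩ => ?_, fun hx => ?_⟩
  · rwa [mem_cylinder_iff_initSeg_eq.1 hη] at hx
  · have hη := (valid_node hroot η).subset_cylinder hx
    exact ⟨hη, by rwa [mem_cylinder_iff_initSeg_eq.1 hη]⟩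

lemma measurableSet_approx (j : ℕ) (η : List Bool) : MeasurableSet (approx μ root j η) := by
  induction j generalizing η with
  | zero => rw [approx_zero hroot]; exact (valid_node hroot η).isClosed.measurableSet
  | succ j ih => rw [approx_succ]; exact (ih _).union (ih _)

lemma approx_succ_subset (j : ℕ) (η : List Bool) :
    approx μ root (j + 1) η ⊆ approx μ root j η :=
  fun x ⟨hη, hx⟩ => ⟨hη, antitone_node_initSeg hroot x (by omega) hx⟩

lemma iInter_approx (η : List Bool) :
    ⋂ j, approx μ root j η = limTree (tree μ root) ∩ cylinder η := by
  ext x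
  simp only [mem_iInter, mem_inter_iff, mem_limTree_tree_iff hroot]
  exact ⟨fun h => ⟨fun n => antitone_node_initSeg hroot x (Nat.le_add_left n _) (h n).2, (h 0).1⟩,
    fun ⟨h, hη⟩ j => ⟨hη, h _⟩⟩

lemma measure_approx_bounds (j : ℕ) (η : List Bool) :
    (node μ root η).k * unitAt η.length ≤ μ (approx μ root j η) ∧
      μ (approx μ root j η) ≤ (node μ root η).k * unitAt η.length + 2⁻¹ ^ j * unitAt η.length := by
  induction j generalizing η with
  | zero =>
    rw [approx_zero hroot, pow_zero, one_mul]
    rcases eq_or_ne (node μ root η).k 0 with hk | hk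
    · simp [hk, (valid_node hroot η).eq_empty hk]
    · rw [(valid_node hroot η).measure_eq hk, add_mul, one_mul]
      exact ⟨le_self_add, le_rfl⟩
  | succ j ih =>
    rw [approx_succ, measure_union ((disjoint_cylinder_append η).mono approx_subset_cylinder
      approx_subset_cylinder) (measurableSet_approx hroot j _)]
    obtain ⟨h₀, h₀'⟩ := ih (η ++ [false])
    obtain ⟨h₁, h₁'⟩ := ih (η ++ [true])
    simp only [List.length_append, List.length_singleton] at h₀ h₀' h₁ h₁'
    have hk : ((node μ root η).k : ℝ≥0∞) * unitAt η.length
        = (node μ root (η ++ [false])).k * unitAt (η.length + 1) +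
          (node μ root (η ++ [true])).k * unitAt (η.length + 1) := by
      rw [← four_mul_unitAt_succ, ← add_mul, ← mul_assoc, mul_comm _ (4 : ℝ≥0∞)]
      congr 1
      exact_mod_cast (isSplit_node hroot η).k_add.symm
    refine ⟨hk ▸ add_le_add h₀ h₁, (add_le_add h₀' h₁').trans_eq ?_⟩
    rw [hk, pow_succ, mul_assoc, ← two_mul_unitAt_succ]
    ring

theorem measure_limTree_inter_cylinder (η : List Bool) :
    μ (limTree (tree μ root) ∩ cylinder η) = (node μ root η).k * unitAt η.length := by
  rw [← iInter_approx hroot]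
  refine tendsto_nhds_unique (tendsto_measure_iInter_atTop
    (fun j => (measurableSet_approx hroot j η).nullMeasurableSet)
    (antitone_nat_of_succ_le fun j => approx_succ_subset hroot j η) ⟨0, measure_ne_top _ _⟩) ?_
  refine tendsto_of_tendsto_of_tendsto_of_le_of_le tendsto_const_nhds ?_
    (fun j => (measure_approx_bounds hroot j η).1) (fun j => (measure_approx_bounds hroot j η).2)
  simpa using tendsto_const_nhds.add (ENNReal.Tendsto.mul_const
    (ENNReal.tendsto_pow_atTop_nhds_zero_of_lt_one (by norm_num : (2 : ℝ≥0∞)⁻¹ < 1))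
    (Or.inr (unitAt_ne_top η.length)))

end CantorSpace

open CantorSpace

theorem stmt4_general (μ : Measure (ℕ → Bool)) [IsProbabilityMeasure μ]
    (hμ : ∀ η : List Bool, μ (cylinder η) = ((2 : ℝ≥0∞) ^ η.length)⁻¹)
    (A : Set (ℕ → Bool)) (hAsmall : μ A < 1 / 1000) :
    ∃ T : Set (List Bool),
      (∀ s ∈ T, ∀ t : List Bool, t <+: s → t ∈ T) ∧
      limTree T ∩ A = ∅ ∧
      μ (limTree T) = 1 / 2 ∧
      ∀ η ∈ T, ∃ k : ℕ, 1 ≤ k ∧ k ≤ 4 ^ (η.length + 1) ∧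
        μ (limTree T ∩ cylinder η) = k * ((4 : ℝ≥0∞) ^ (η.length + 1))⁻¹ := by
  have := nullSingletonClass_of_measure_cylinder hμ
  obtain ⟨U, hAU, hU, hμU⟩ := A.exists_isOpen_lt_of_lt _ hAsmall
  obtain ⟨root, hroot2, hroot, hrootU⟩ :=
    exists_valid_node (η := []) (k := 2) hU.isClosed_compl (by simp) fun _ => by
      norm_num
      exact three_mul_unitAt_zero_le_measure_compl hU.measurableSet (hμU.le.trans (by norm_num))
  have hmeasure := measure_limTree_inter_cylinder hroot
  refine ⟨tree μ root, fun s hs t ⟨u, hu⟩ ht => hs (hu ▸ node_k_append_eq_zero hroot ht u), ?_, ?_,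
    fun η hη => ⟨_, Nat.one_le_iff_ne_zero.2 hη,
      le_four_pow_of_mul_unitAt_le_one ((hmeasure η).symm.trans_le prob_le_one), hmeasure η⟩⟩
  · refine eq_empty_of_forall_notMem fun x ⟨hx, hxA⟩ => hrootU ?_ (hAU hxA)
    simpa using (mem_limTree_tree_iff hroot).1 hx 0
  · rw [← inter_univ (limTree _), ← cylinder_nil, hmeasure, node_nil, hroot2, Nat.cast_ofNat]
    exact two_mul_unitAt_zero

/-- Let `μ` be the fair-coin product measure on Cantor space (characterized by its
values `2^{-|η|}` on the basic clopen sets `[η]`), and let `A` be Borel with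
`μ(A) < 1/1000`. Then there is a tree `T ⊆ 2^{<ω}` with `lim(T) ∩ A = ∅`,
`μ(lim(T)) = 1/2`, and for every `η ∈ T`, `μ(lim(T) ∩ [η]) = k · 4^{-(|η|+1)}`
for some integer `1 ≤ k ≤ 4^{|η|+1}`. -/
theorem stmt4 (μ : Measure (ℕ → Bool)) [IsProbabilityMeasure μ]
    (hμ : ∀ η : List Bool, μ (cylinder η) = ((2 : ℝ≥0∞) ^ η.length)⁻¹)
    (A : Set (ℕ → Bool)) (hA : MeasurableSet A) (hAsmall : μ A < 1 / 1000) :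
    ∃ T : Set (List Bool),
      (∀ s ∈ T, ∀ t : List Bool, t <+: s → t ∈ T) ∧
      limTree T ∩ A = ∅ ∧
      μ (limTree T) = 1 / 2 ∧
      ∀ η ∈ T, ∃ k : ℕ, 1 ≤ k ∧ k ≤ 4 ^ (η.length + 1) ∧
        μ (limTree T ∩ cylinder η) = k * ((4 : ℝ≥0∞) ^ (η.length + 1))⁻¹ :=
  stmt4_general μ hμ A hAsmall
end

section
/- Let h : ℕ → ℕ → ℕ be a function such that h(a,b) ≠ h(b,c) whenever a < b < c. Then there exists a strictly increasing function g : ℕ → ℕ such that the sequence n ↦ h(g(n), g(n+1)) is strictly increasing. In particular, for every n* there exist a < b with h(a,b) > n*. -/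
/-!
Ramsey's theorem for triples is replaced by a nonprincipal ultrafilter `U`. For `a < b`, either
`h a b < h b c` for `U`-almost every `c`, or `h b c < h a b` for `U`-almost every `c`; taking
`U`-majorities twice more fixes one of the two directions for `U`-almost all `a`, then
`U`-almost all `b`, and along such pairs a chain `g 0 < g 1 < ⋯` is built greedily. In the
decreasing direction this chain would be an infinite descending sequence of values of `h`.
-/

open Filter

theorem Filter.exists_seq_of_eventually_eventually {α : Type*} {f : Filter α} [f.NeBot]
    {C : α → α → Prop} {R : α → α → α → Prop}
    (hC : ∀ᶠ a in f, ∀ᶠ b in f, C a b) (hR : ∀ a b, C a b → ∀ᶠ c in f, R a b c) :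
    ∃ g : ℕ → α, ∀ n, C (g n) (g (n + 1)) ∧ R (g n) (g (n + 1)) (g (n + 2)) := by
  set I : α × α → Prop := fun p => C p.1 p.2 ∧ ∀ᶠ c in f, C p.2 c
  have hstep : ∀ p, I p → ∃ c, R p.1 p.2 c ∧ I (p.2, c) := fun p hp =>
    ((hR _ _ hp.1).and (hp.2.and hC)).exists
  have := NeBot.nonempty f
  choose! next hnext using hstep
  obtain ⟨p₀, hp₀⟩ : ∃ p, I p := by
    obtain ⟨a, ha⟩ := hC.exists
    obtain ⟨b, hab, hb⟩ := (ha.and hC).exists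
    exact ⟨(a, b), hab, hb⟩
  set seq : ℕ → α × α := fun n => (fun p => (p.2, next p))^[n] p₀
  have hseq : ∀ n, seq (n + 1) = ((seq n).2, next (seq n)) := fun n =>
    Function.iterate_succ_apply' _ n p₀
  have hI : ∀ n, I (seq n) := by
    intro n
    induction n with
    | zero => exact hp₀
    | succ n ih => rw [hseq]; exact (hnext _ ih).2
  refine ⟨fun n => (seq n).1, fun n => ?_⟩
  simp only [hseq]
  exact ⟨(hI n).1, (hnext _ (hI n)).1⟩

section

variable {α β : Type*} [Preorder α] [Nonempty α] [IsDirectedOrder α] [NoMaxOrder α]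
  [LinearOrder β] [WellFoundedLT β]

theorem exists_strictMono_comp_succ_of_ne (h : α → α → β)
    (hh : ∀ a b c, a < b → b < c → h a b ≠ h b c) :
    ∃ g : ℕ → α, StrictMono g ∧ StrictMono (fun n => h (g n) (g (n + 1))) := by
  set U : Ultrafilter α := Ultrafilter.of atTop
  have hgt : ∀ b : α, ∀ᶠ c in ↑U, b < c := fun b => Ultrafilter.of_le _ (eventually_gt_atTop b)
  have hsplit : ∀ a b : α, a < b →
      (∀ᶠ c in ↑U, h a b < h b c) ∨ ∀ᶠ c in ↑U, h b c < h a b := fun a b hab => by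
    rw [← Ultrafilter.eventually_or]
    filter_upwards [hgt b] with c hbc
    exact (hh a b c hab hbc).lt_or_gt
  by_cases hup : ∀ᶠ a in ↑U, ∀ᶠ b in ↑U, ∀ᶠ c in ↑U, h a b < h b c
  · have hincr : ∀ᶠ a in ↑U, ∀ᶠ b in ↑U, a < b ∧ ∀ᶠ c in ↑U, h a b < h b c := by
      filter_upwards [hup] with a ha
      filter_upwards [hgt a, ha] with b using And.intro
    obtain ⟨g, hg⟩ := exists_seq_of_eventually_eventually hincr
      (R := fun a b c => h a b < h b c) (fun a b hab => hab.2)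
    exact ⟨g, strictMono_nat_of_lt_succ fun n => (hg n).1.1,
      strictMono_nat_of_lt_succ fun n => (hg n).2⟩
  · have hdecr : ∀ᶠ a in ↑U, ∀ᶠ b in ↑U, a < b ∧ ∀ᶠ c in ↑U, h b c < h a b := by
      rw [← Ultrafilter.eventually_not] at hup
      filter_upwards [hup] with a ha
      rw [← Ultrafilter.eventually_not] at ha
      filter_upwards [hgt a, ha] with b hab hb
      exact ⟨hab, (hsplit a b hab).resolve_left hb⟩
    obtain ⟨g, hg⟩ := exists_seq_of_eventually_eventually hdecr
      (R := fun a b c => h b c < h a b) (fun a b hab => hab.2)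
    obtain ⟨n, hn⟩ := WellFounded.not_rel_apply_succ (r := (· < ·)) fun n => h (g n) (g (n + 1))
    exact absurd (hg n).2 hn

end

/-- If `h : ℕ → ℕ → ℕ` satisfies `h a b ≠ h b c` whenever `a < b < c`, then there is
a strictly increasing `g : ℕ → ℕ` such that `n ↦ h (g n) (g (n+1))` is strictly
increasing; in particular for every `n*` there are `a < b` with `h a b > n*`. -/
theorem stmt9 (h : ℕ → ℕ → ℕ)
    (hh : ∀ a b c : ℕ, a < b → b < c → h a b ≠ h b c) :
    (∃ g : ℕ → ℕ, StrictMono g ∧ StrictMono (fun n => h (g n) (g (n + 1)))) ∧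
    ∀ nstar : ℕ, ∃ a b : ℕ, a < b ∧ nstar < h a b := by
  obtain ⟨g, hg, hgh⟩ := exists_strictMono_comp_succ_of_ne h hh
  refine ⟨⟨g, hg, hgh⟩, fun n => ⟨g (n + 1), g (n + 2), hg (by omega), ?_⟩⟩
  calc n < n + 1 := n.lt_succ_self
    _ ≤ h (g (n + 1)) (g (n + 1 + 1)) := hgh.le_apply
end
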